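/- arXiv:1808.01691 — 2 statements merged into one kernel-verified Lean document; each statement's English description precedes it below -/
import Mathlib

section
/- In the randomize-first-sample-second design, the covariance of the two arm sample means is Cov[ȳ(1), ȳ(0)] = -S_{10}/N = -(S_1² + S_0² - S_τ²)/(2N). -/
open Finset

/-- Expectation under the uniform distribution on a finite sample space. -/
noncomputable def Ex {α : Type*} (Ω : Finset α) (f : α → ℝ) : ℝ :=
  (∑ ω ∈ Ω, f ω) / (Ω.card : ℝ)

/-- The randomize-first-sample-second design: outcomes are triples `(A, B, C)`
where `A` is the treatment-1 group of size `N₁` (its complement is group 0),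
`B ⊆ A` is the size-`n₁` sample from group 1, and `C ⊆ Aᶜ` is the size-`n₀`
sample from group 0, all chosen uniformly at random. -/
def design2 (N N1 n1 n0 : ℕ) :
    Finset (Finset (Fin N) × Finset (Fin N) × Finset (Fin N)) :=
  Finset.univ.filter (fun p =>
    p.1.card = N1 ∧ p.2.1 ⊆ p.1 ∧ p.2.1.card = n1 ∧
    p.2.2 ⊆ p.1ᶜ ∧ p.2.2.card = n0)

/-- Indicator that unit `i` is sampled from treatment group 1. -/
def S1 {N : ℕ} (i : Fin N)
    (p : Finset (Fin N) × Finset (Fin N) × Finset (Fin N)) : ℝ :=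
  if i ∈ p.2.1 then 1 else 0

/-- Indicator that unit `i` is sampled from treatment group 0. -/
def S0 {N : ℕ} (i : Fin N)
    (p : Finset (Fin N) × Finset (Fin N) × Finset (Fin N)) : ℝ :=
  if i ∈ p.2.2 then 1 else 0

/-! Relabelling the units by a permutation of `Fin N` maps the design onto itself, and the
permutation group is transitive on units and on ordered pairs of distinct units. Hence
`P(i ∈ B)` does not depend on `i`, and `P(i ∈ B, j ∈ C)` does not depend on the pair `i ≠ j`
(it vanishes for `i = j` since `B` and `C` are disjoint). Summing against `|B| = n₁` and
`|B| * |C| = n₁ * n₀` gives `P(i ∈ B) = n₁ / N` and `P(i ∈ B, j ∈ C) = n₁ n₀ / (N (N - 1))`, so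
`E[ȳ(1) ȳ(0)] = ((∑ Y1) (∑ Y0) - ∑ Y1 Y0) / (N (N - 1))` while `E[ȳ(1)] E[ȳ(0)] = Ȳ1 Ȳ0`.
The second identity is `S_τ² = S₁² + S₀² - 2 S₁₀`. -/

open Pointwise

section Ex

variable {α : Type*} {Ω : Finset α}

lemma Ex_congr {f g : α → ℝ} (h : ∀ a ∈ Ω, f a = g a) : Ex Ω f = Ex Ω g := by
  rw [Ex, Ex, Finset.sum_congr rfl h]

lemma Ex_const (hΩ : Ω.Nonempty) (c : ℝ) : Ex Ω (fun _ => c) = c := by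
  have : (Ω.card : ℝ) ≠ 0 := by exact_mod_cast hΩ.card_ne_zero
  rw [Ex, Finset.sum_const, nsmul_eq_mul, mul_div_cancel_left₀ c this]

lemma Ex_sum {ι : Type*} (s : Finset ι) (f : ι → α → ℝ) :
    Ex Ω (fun a => ∑ i ∈ s, f i a) = ∑ i ∈ s, Ex Ω (f i) := by
  simp only [Ex, Finset.sum_div]
  exact Finset.sum_comm

lemma Ex_mul_const (f : α → ℝ) (c : ℝ) : Ex Ω (fun a => f a * c) = Ex Ω f * c := by
  simp only [Ex, ← Finset.sum_mul, div_mul_eq_mul_div]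

lemma Ex_div_const (f : α → ℝ) (c : ℝ) : Ex Ω (fun a => f a / c) = Ex Ω f / c := by
  simp only [Ex, ← Finset.sum_div, div_right_comm]

lemma Ex_comp_smul {G : Type*} [Group G] [MulAction G α]
    (hΩ : ∀ (g : G) (a : α), g • a ∈ Ω ↔ a ∈ Ω) (g : G) (f : α → ℝ) :
    Ex Ω (fun a => f (g • a)) = Ex Ω f := by
  rw [Ex, Ex, Finset.sum_nbij' (s := Ω) (t := Ω) (g • ·) (g⁻¹ • ·) (by simp [hΩ]) (by simp [hΩ])
    (by simp) (by simp) (fun _ _ => rfl)]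

end Ex

section Indicator

variable {ι α : Type*} [Fintype ι] [DecidableEq ι] {Ω : Finset α} {B C : α → Finset ι}

lemma sum_mem_eq_sum_indicator_mul (s : Finset ι) (Y : ι → ℝ) :
    ∑ i ∈ s, Y i = ∑ i, (if i ∈ s then 1 else 0) * Y i := by
  simp only [boole_mul, Finset.sum_ite_mem, Finset.univ_inter]

lemma sum_indicator_mem (s : Finset ι) : ∑ i, (if i ∈ s then (1 : ℝ) else 0) = s.card := by
  simp

lemma sum_sum_ite_eq_zero_else_mul (r : ℝ) (f : ι → ι → ℝ) :
    ∑ k, ∑ l, (if k = l then 0 else r) * f k l = r * (∑ k, ∑ l, f k l - ∑ k, f k k) := by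
  have hterm (k l : ι) :
      (if k = l then 0 else r) * f k l = r * f k l - if k = l then r * f k l else 0 := by
    split_ifs <;> ring
  simp only [hterm, Finset.sum_sub_distrib, Finset.sum_ite_eq, Finset.mem_univ, if_true,
    mul_sub, Finset.mul_sum]

lemma Ex_sum_mem (Y : ι → ℝ) :
    Ex Ω (fun a => ∑ i ∈ B a, Y i) = ∑ i, Ex Ω (fun a => if i ∈ B a then 1 else 0) * Y i := by
  simp only [← Ex_mul_const, ← Ex_sum, ← sum_mem_eq_sum_indicator_mul]

lemma Ex_sum_mem_mul_sum_mem (Y Z : ι → ℝ) :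
    Ex Ω (fun a => (∑ i ∈ B a, Y i) * ∑ j ∈ C a, Z j) =
      ∑ i, ∑ j, Ex Ω (fun a => (if i ∈ B a then 1 else 0) * (if j ∈ C a then 1 else 0)) *
        (Y i * Z j) := by
  simp only [← Ex_mul_const, ← Ex_sum, sum_mem_eq_sum_indicator_mul (B _),
    sum_mem_eq_sum_indicator_mul (C _), Finset.sum_mul_sum, mul_mul_mul_comm]

end Indicator

section Exchangeable

open Equiv

variable {ι α : Type*} [DecidableEq ι] [MulAction (Perm ι) α] {Ω : Finset α} {B C : α → Finset ι}

lemma Ex_indicator_mem_eq (hΩ : ∀ (σ : Perm ι) a, σ • a ∈ Ω ↔ a ∈ Ω)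
    (hB : ∀ (σ : Perm ι) a, B (σ • a) = σ • B a) (i k : ι) :
    Ex Ω (fun a => if i ∈ B a then 1 else 0) = Ex Ω (fun a => if k ∈ B a then 1 else 0) := by
  obtain ⟨σ, rfl⟩ := MulAction.exists_smul_eq (Perm ι) i k
  rw [← Ex_comp_smul hΩ σ (fun a => if σ • i ∈ B a then 1 else 0)]
  simp only [hB, Finset.smul_mem_smul_finset_iff]

lemma Ex_indicator_mem_mul_mem_eq (hΩ : ∀ (σ : Perm ι) a, σ • a ∈ Ω ↔ a ∈ Ω)
    (hB : ∀ (σ : Perm ι) a, B (σ • a) = σ • B a) (hC : ∀ (σ : Perm ι) a, C (σ • a) = σ • C a)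
    {i j k l : ι} (hij : i ≠ j) (hkl : k ≠ l) :
    Ex Ω (fun a => (if i ∈ B a then 1 else 0) * (if j ∈ C a then 1 else 0)) =
      Ex Ω (fun a => (if k ∈ B a then 1 else 0) * (if l ∈ C a then 1 else 0)) := by
  obtain ⟨σ, rfl, rfl⟩ :=
    MulAction.is_two_pretransitive_iff.mp (Perm.isMultiplyPretransitive ι 2) hij hkl
  rw [← Ex_comp_smul hΩ σ
    (fun a => (if σ • i ∈ B a then 1 else 0) * (if σ • j ∈ C a then 1 else 0))]
  simp only [hB, hC, Finset.smul_mem_smul_finset_iff]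

variable [Fintype ι]

lemma Ex_indicator_mem (hΩ : ∀ (σ : Perm ι) a, σ • a ∈ Ω ↔ a ∈ Ω)
    (hB : ∀ (σ : Perm ι) a, B (σ • a) = σ • B a) (hne : Ω.Nonempty) {n : ℕ}
    (hcard : ∀ a ∈ Ω, (B a).card = n) (i : ι) :
    Ex Ω (fun a => if i ∈ B a then 1 else 0) = n / Fintype.card ι := by
  have htotal : ∑ k, Ex Ω (fun a => if k ∈ B a then 1 else 0) = n := by
    rw [← Ex_sum, Ex_congr (g := fun _ => (n : ℝ)) fun a ha => by
      rw [sum_indicator_mem, hcard a ha], Ex_const hne]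
  simp only [Ex_indicator_mem_eq hΩ hB _ i, Finset.sum_const, Finset.card_univ,
    nsmul_eq_mul] at htotal
  have : (Fintype.card ι : ℝ) ≠ 0 := by exact_mod_cast (Fintype.card_pos_iff.2 ⟨i⟩).ne'
  rw [← htotal, mul_div_cancel_left₀ _ this]

lemma Ex_indicator_mem_mul_mem (hΩ : ∀ (σ : Perm ι) a, σ • a ∈ Ω ↔ a ∈ Ω)
    (hB : ∀ (σ : Perm ι) a, B (σ • a) = σ • B a) (hC : ∀ (σ : Perm ι) a, C (σ • a) = σ • C a)
    (hne : Ω.Nonempty) {n₁ n₀ : ℕ} (hcardB : ∀ a ∈ Ω, (B a).card = n₁)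
    (hcardC : ∀ a ∈ Ω, (C a).card = n₀) (hdisj : ∀ a ∈ Ω, Disjoint (B a) (C a)) (i j : ι) :
    Ex Ω (fun a => (if i ∈ B a then 1 else 0) * (if j ∈ C a then 1 else 0)) =
      if i = j then (0 : ℝ) else n₁ * n₀ / (Fintype.card ι * (Fintype.card ι - 1)) := by
  have hdiag (k : ι) :
      Ex Ω (fun a => (if k ∈ B a then 1 else 0) * (if k ∈ C a then 1 else 0)) = 0 := by
    rw [Ex_congr (g := fun _ => 0) fun a ha => by
        simpa using fun h => Finset.disjoint_right.mp (hdisj a ha) h,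
      Ex, Finset.sum_const_zero, zero_div]
  split_ifs with hij
  · exact hij ▸ hdiag i
  set r := Ex Ω (fun a => (if i ∈ B a then 1 else 0) * (if j ∈ C a then 1 else 0))
  have hpair (k l : ι) :
      Ex Ω (fun a => (if k ∈ B a then 1 else 0) * (if l ∈ C a then 1 else 0)) =
        if k = l then 0 else r := by
    split_ifs with hkl
    · exact hkl ▸ hdiag k
    · exact Ex_indicator_mem_mul_mem_eq hΩ hB hC hkl hij
  have htotal : ∑ k, ∑ l,
      Ex Ω (fun a => (if k ∈ B a then 1 else 0) * (if l ∈ C a then 1 else 0)) = n₁ * n₀ := by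
    simp_rw [← Ex_sum]
    rw [Ex_congr (g := fun _ => (n₁ * n₀ : ℝ)) fun a ha => by
      rw [← Finset.sum_mul_sum, sum_indicator_mem, sum_indicator_mem, hcardB a ha, hcardC a ha],
      Ex_const hne]
  have hcount := sum_sum_ite_eq_zero_else_mul (ι := ι) r fun _ _ => 1
  simp only [mul_one, Finset.sum_const, Finset.card_univ, nsmul_eq_mul] at hcount
  simp only [hpair, hcount] at htotal
  have hcard : (1 : ℝ) < Fintype.card ι := by exact_mod_cast Fintype.one_lt_card_iff.2 ⟨i, j, hij⟩
  rw [← htotal]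
  field_simp [show (Fintype.card ι : ℝ) - 1 ≠ 0 by linarith]

lemma Ex_sum_mem_div (hΩ : ∀ (σ : Perm ι) a, σ • a ∈ Ω ↔ a ∈ Ω)
    (hB : ∀ (σ : Perm ι) a, B (σ • a) = σ • B a) (hne : Ω.Nonempty) {n : ℕ}
    (hcard : ∀ a ∈ Ω, (B a).card = n) (hn : n ≠ 0) (Y : ι → ℝ) :
    Ex Ω (fun a => (∑ i ∈ B a, Y i) / n) = (∑ i, Y i) / Fintype.card ι := by
  rw [Ex_div_const, Ex_sum_mem]
  simp only [Ex_indicator_mem hΩ hB hne hcard, ← Finset.mul_sum]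
  field_simp

lemma Ex_sum_mem_div_mul_sum_mem_div (hΩ : ∀ (σ : Perm ι) a, σ • a ∈ Ω ↔ a ∈ Ω)
    (hB : ∀ (σ : Perm ι) a, B (σ • a) = σ • B a) (hC : ∀ (σ : Perm ι) a, C (σ • a) = σ • C a)
    (hne : Ω.Nonempty) {n₁ n₀ : ℕ} (hcardB : ∀ a ∈ Ω, (B a).card = n₁)
    (hcardC : ∀ a ∈ Ω, (C a).card = n₀) (hdisj : ∀ a ∈ Ω, Disjoint (B a) (C a))
    (hn₁ : n₁ ≠ 0) (hn₀ : n₀ ≠ 0) (Y Z : ι → ℝ) :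
    Ex Ω (fun a => (∑ i ∈ B a, Y i) / n₁ * ((∑ j ∈ C a, Z j) / n₀)) =
      ((∑ i, Y i) * (∑ j, Z j) - ∑ i, Y i * Z i) /
        (Fintype.card ι * (Fintype.card ι - 1)) := by
  simp only [div_mul_div_comm]
  rw [Ex_div_const, Ex_sum_mem_mul_sum_mem]
  simp only [Ex_indicator_mem_mul_mem hΩ hB hC hne hcardB hcardC hdisj]
  rw [sum_sum_ite_eq_zero_else_mul, ← Finset.sum_mul_sum]
  field_simp

end Exchangeable

lemma Finset.smul_finset_compl {G β : Type*} [Group G] [MulAction G β] [Fintype β]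
    [DecidableEq β] (g : G) (s : Finset β) : g • sᶜ = (g • s)ᶜ := by
  rw [Finset.compl_eq_univ_sdiff, Finset.compl_eq_univ_sdiff, Finset.smul_finset_sdiff,
    Finset.smul_finset_univ]

lemma sum_sub_mean_mul_sub_mean {ι : Type*} [Fintype ι] (Y Z : ι → ℝ) :
    ∑ i, (Y i - (∑ j, Y j) / Fintype.card ι) * (Z i - (∑ j, Z j) / Fintype.card ι) =
      ∑ i, Y i * Z i - (∑ i, Y i) * (∑ i, Z i) / Fintype.card ι := by
  simp only [sub_mul, mul_sub, Finset.sum_sub_distrib, ← Finset.mul_sum, ← Finset.sum_mul,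
    Finset.sum_const, Finset.card_univ, nsmul_eq_mul]
  rcases eq_or_ne (Fintype.card ι : ℝ) 0 with h | h
  · simp [h]
  · field_simp
    ring

lemma sum_sub_sub_sq {ι : Type*} (s : Finset ι) (u v : ι → ℝ) (a b : ℝ) :
    ∑ i ∈ s, ((u i - v i) - (a - b)) ^ 2 =
      ∑ i ∈ s, (u i - a) ^ 2 + ∑ i ∈ s, (v i - b) ^ 2 - 2 * ∑ i ∈ s, (u i - a) * (v i - b) := by
  rw [Finset.mul_sum, ← Finset.sum_add_distrib, ← Finset.sum_sub_distrib]
  exact Finset.sum_congr rfl fun i _ => by ring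

section Design2

variable {N N1 n1 n0 : ℕ}

lemma mem_design2 {p : Finset (Fin N) × Finset (Fin N) × Finset (Fin N)} :
    p ∈ design2 N N1 n1 n0 ↔
      p.1.card = N1 ∧ p.2.1 ⊆ p.1 ∧ p.2.1.card = n1 ∧ p.2.2 ⊆ p.1ᶜ ∧ p.2.2.card = n0 := by
  simp [design2]

lemma smul_mem_design2 (σ : Equiv.Perm (Fin N))
    (p : Finset (Fin N) × Finset (Fin N) × Finset (Fin N)) :
    σ • p ∈ design2 N N1 n1 n0 ↔ p ∈ design2 N N1 n1 n0 := by
  obtain ⟨A, B, C⟩ := p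
  simp only [mem_design2, Prod.smul_mk, Finset.card_smul_finset, ← Finset.smul_finset_compl,
    Finset.smul_finset_subset_smul_finset_iff]

lemma design2_nonempty (hN1 : N1 ≤ N) (hn1 : n1 ≤ N1) (hn0 : n0 ≤ N - N1) :
    (design2 N N1 n1 n0).Nonempty := by
  obtain ⟨A, -, hA⟩ := Finset.exists_subset_card_eq (s := (Finset.univ : Finset (Fin N)))
    (n := N1) (by simpa using hN1)
  obtain ⟨B, hBA, hB⟩ := Finset.exists_subset_card_eq (s := A) (hA ▸ hn1)
  obtain ⟨C, hCA, hC⟩ := Finset.exists_subset_card_eq (s := Aᶜ) (n := n0)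
    (by rw [Finset.card_compl, hA]; simpa using hn0)
  exact ⟨(A, B, C), mem_design2.2 ⟨hA, hBA, hB, hCA, hC⟩⟩

lemma disjoint_of_mem_design2 {p : Finset (Fin N) × Finset (Fin N) × Finset (Fin N)}
    (hp : p ∈ design2 N N1 n1 n0) : Disjoint p.2.1 p.2.2 := by
  obtain ⟨-, hBA, -, hCA, -⟩ := mem_design2.1 hp
  exact (Finset.subset_compl_iff_disjoint_right.1 hCA).symm.mono_left hBA

end Design2

/-- Cov[ȳ(1), ȳ(0)] = -S₁₀/N = -(S₁² + S₀² - S_τ²)/(2N). -/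
theorem design2_arm_means_covariance (N N1 n1 n0 : ℕ) (hN : 2 ≤ N)
    (hN1 : N1 ≤ N) (hn1 : 1 ≤ n1) (hn1' : n1 ≤ N1)
    (hn0 : 1 ≤ n0) (hn0' : n0 ≤ N - N1)
    (Y1 Y0 : Fin N → ℝ) (Ybar1 Ybar0 S1sq S0sq S10 Stausq : ℝ)
    (hY1 : Ybar1 = (∑ i, Y1 i) / (N : ℝ))
    (hY0 : Ybar0 = (∑ i, Y0 i) / (N : ℝ))
    (hS1 : S1sq = (∑ i, (Y1 i - Ybar1) ^ 2) / ((N : ℝ) - 1))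
    (hS0 : S0sq = (∑ i, (Y0 i - Ybar0) ^ 2) / ((N : ℝ) - 1))
    (hS10 : S10 = (∑ i, (Y1 i - Ybar1) * (Y0 i - Ybar0)) / ((N : ℝ) - 1))
    (hStau : Stausq =
      (∑ i, ((Y1 i - Y0 i) - (Ybar1 - Ybar0)) ^ 2) / ((N : ℝ) - 1)) :
    Ex (design2 N N1 n1 n0)
        (fun p => ((∑ i ∈ p.2.1, Y1 i) / (n1 : ℝ))
          * ((∑ i ∈ p.2.2, Y0 i) / (n0 : ℝ)))
      - Ex (design2 N N1 n1 n0) (fun p => (∑ i ∈ p.2.1, Y1 i) / (n1 : ℝ))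
        * Ex (design2 N N1 n1 n0) (fun p => (∑ i ∈ p.2.2, Y0 i) / (n0 : ℝ))
      = -S10 / (N : ℝ) ∧
    -S10 / (N : ℝ) = -(S1sq + S0sq - Stausq) / (2 * (N : ℝ)) := by
  have hne := design2_nonempty hN1 hn1' hn0'
  have hcard1 p (hp : p ∈ design2 N N1 n1 n0) := (mem_design2.1 hp).2.2.1
  have hcard0 p (hp : p ∈ design2 N N1 n1 n0) := (mem_design2.1 hp).2.2.2.2
  rw [Ex_sum_mem_div_mul_sum_mem_div smul_mem_design2 (fun _ _ => rfl) (fun _ _ => rfl) hne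
      hcard1 hcard0 (fun _ => disjoint_of_mem_design2) (by omega) (by omega),
    Ex_sum_mem_div smul_mem_design2 (fun _ _ => rfl) hne hcard1 (by omega),
    Ex_sum_mem_div smul_mem_design2 (fun _ _ => rfl) hne hcard0 (by omega), Fintype.card_fin]
  have hcov : ∑ i, (Y1 i - Ybar1) * (Y0 i - Ybar0) =
      ∑ i, Y1 i * Y0 i - (∑ i, Y1 i) * (∑ i, Y0 i) / N := by
    simpa [hY1, hY0] using sum_sub_mean_mul_sub_mean Y1 Y0
  have hτ : Stausq = S1sq + S0sq - 2 * S10 := by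
    rw [hStau, hS1, hS0, hS10, sum_sub_sub_sq]
    ring
  constructor
  · have hN' : (2 : ℝ) ≤ N := by exact_mod_cast hN
    rw [hS10, hcov]
    field_simp [show (N : ℝ) - 1 ≠ 0 by linarith]
    ring
  · rw [hτ]
    ring
end

section
/- In the randomize-first-sample-second design, the sampling variance of the mean-difference estimator is Var(τ̂) = S_1²/n_1 + S_0²/n_0 - S_τ²/N. -/
open Finset

lemma count_supset {α : Type*} [DecidableEq α] (s t : Finset α) (k : ℕ)
    (hts : t ⊆ s) (htk : t.card ≤ k) :
    ((s.powersetCard k).filter (fun B => t ⊆ B)).card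
      = (s.card - t.card).choose (k - t.card) := by
  rw [← Finset.card_sdiff_of_subset hts, ← Finset.card_powersetCard]
  apply Finset.card_bij' (fun B _ => B \ t) (fun D _ => D ∪ t)
  · intro B hB
    simp only [Finset.mem_filter, Finset.mem_powersetCard] at hB ⊢
    obtain ⟨⟨hBs, hBk⟩, htB⟩ := hB
    constructor
    · exact Finset.sdiff_subset_sdiff hBs (Finset.Subset.refl t)
    · rw [Finset.card_sdiff_of_subset htB, hBk]
  · intro D hD
    simp only [Finset.mem_filter, Finset.mem_powersetCard] at hD ⊢
    obtain ⟨hDs, hDk⟩ := hD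
    have hdisj : Disjoint D t := Finset.disjoint_of_subset_left hDs Finset.sdiff_disjoint
    refine ⟨⟨Finset.union_subset (hDs.trans (Finset.sdiff_subset)) hts, ?_⟩, Finset.subset_union_right⟩
    rw [Finset.card_union_of_disjoint hdisj, hDk]
    omega
  · intro B hB
    simp only [Finset.mem_filter] at hB
    exact Finset.sdiff_union_of_subset hB.2
  · intro D hD
    simp only [Finset.mem_powersetCard] at hD
    have hdisj : Disjoint D t := Finset.disjoint_of_subset_left hD.1 Finset.sdiff_disjoint
    exact Finset.union_sdiff_cancel_right hdisj

lemma count_mem {α : Type*} [DecidableEq α] (s : Finset α) (i : α) (hi : i ∈ s)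
    (k : ℕ) (hk : 1 ≤ k) :
    ((s.powersetCard k).filter (fun B => i ∈ B)).card
      = (s.card - 1).choose (k - 1) := by
  have := count_supset s {i} k (by simpa using hi) (by simpa using hk)
  simpa using this

lemma count_pair {α : Type*} [DecidableEq α] (s : Finset α) (i j : α)
    (hi : i ∈ s) (hj : j ∈ s) (hij : i ≠ j) (k : ℕ) (hk : 2 ≤ k) :
    ((s.powersetCard k).filter (fun B => i ∈ B ∧ j ∈ B)).card
      = (s.card - 2).choose (k - 2) := by
  have h2 : ({i, j} : Finset α).card = 2 := by
    rw [Finset.card_insert_of_notMem (by simpa using hij), Finset.card_singleton]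
  have := count_supset s {i, j} k (by
    intro x hx; simp at hx; rcases hx with rfl | rfl <;> assumption) (by omega)
  rw [h2] at this
  rw [← this]
  congr 1
  ext B
  simp [Finset.insert_subset_iff]

lemma count_small {α : Type*} [DecidableEq α] (s t : Finset α) (k : ℕ)
    (htk : k < t.card) :
    ((s.powersetCard k).filter (fun B => t ⊆ B)).card = 0 := by
  rw [Finset.card_eq_zero, Finset.filter_eq_empty_iff]
  intro B hB htB
  rw [Finset.mem_powersetCard] at hB
  have := Finset.card_le_card htB
  omega

/-- Coefficient for off-diagonal pair counts. -/
noncomputable def pc (m k : ℕ) : ℝ :=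
  if 2 ≤ k then ((m - 2).choose (k - 2) : ℝ) else 0

lemma count_pair_real {α : Type*} [DecidableEq α] (s : Finset α) (i j : α)
    (hi : i ∈ s) (hj : j ∈ s) (hij : i ≠ j) (k : ℕ) (hk : 1 ≤ k) :
    (((s.powersetCard k).filter (fun B => i ∈ B ∧ j ∈ B)).card : ℝ)
      = pc s.card k := by
  rcases Nat.lt_or_ge k 2 with h | h
  · have hk1 : k = 1 := by omega
    have h2 : ({i, j} : Finset α).card = 2 := by
      rw [Finset.card_insert_of_notMem (by simpa using hij), Finset.card_singleton]
    have := count_small s {i, j} k (by omega)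
    have heq : (s.powersetCard k).filter (fun B => i ∈ B ∧ j ∈ B)
        = (s.powersetCard k).filter (fun B => ({i, j} : Finset α) ⊆ B) := by
      ext B; simp [Finset.insert_subset_iff]
    rw [heq, this, pc, if_neg (by omega)]
    simp
  · rw [count_pair s i j hi hj hij k h, pc, if_pos h]

lemma sum_indicator_eq {α : Type*} [DecidableEq α] {s B : Finset α} (hBs : B ⊆ s)
    (g : α → ℝ) : ∑ i ∈ B, g i = ∑ i ∈ s, if i ∈ B then g i else 0 := by
  rw [Finset.sum_ite_mem, Finset.inter_eq_right.mpr hBs]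

lemma sum_powersetCard_sum {α : Type*} [DecidableEq α] (s : Finset α) (g : α → ℝ)
    (k : ℕ) (hk : 1 ≤ k) :
    ∑ B ∈ s.powersetCard k, ∑ i ∈ B, g i
      = ((s.card - 1).choose (k - 1) : ℝ) * ∑ i ∈ s, g i := by
  have h1 : ∑ B ∈ s.powersetCard k, ∑ i ∈ B, g i
      = ∑ B ∈ s.powersetCard k, ∑ i ∈ s, if i ∈ B then g i else 0 :=
    Finset.sum_congr rfl fun B hB =>
      sum_indicator_eq (Finset.mem_powersetCard.mp hB).1 g
  rw [h1, Finset.sum_comm, Finset.mul_sum]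
  refine Finset.sum_congr rfl fun i hi => ?_
  rw [← Finset.sum_filter, Finset.sum_const, count_mem s i hi k hk]
  simp [mul_comm]

lemma sum_powersetCard_sq {α : Type*} [DecidableEq α] (s : Finset α) (g : α → ℝ)
    (k : ℕ) (hk : 1 ≤ k) :
    ∑ B ∈ s.powersetCard k, (∑ i ∈ B, g i) ^ 2
      = ((s.card - 1).choose (k - 1) : ℝ) * ∑ i ∈ s, (g i) ^ 2
        + pc s.card k * ((∑ i ∈ s, g i) ^ 2 - ∑ i ∈ s, (g i) ^ 2) := by
  have key : ∀ B ∈ s.powersetCard k, (∑ i ∈ B, g i) ^ 2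
      = ∑ i ∈ s, ∑ j ∈ s, if i ∈ B ∧ j ∈ B then g i * g j else 0 := by
    intro B hB
    have hBs := (Finset.mem_powersetCard.mp hB).1
    rw [sq, sum_indicator_eq hBs, Finset.sum_mul_sum]
    refine Finset.sum_congr rfl fun i _ => Finset.sum_congr rfl fun j _ => ?_
    by_cases h1 : i ∈ B <;> by_cases h2 : j ∈ B <;> simp [h1, h2]
  calc ∑ B ∈ s.powersetCard k, (∑ i ∈ B, g i) ^ 2
      = ∑ B ∈ s.powersetCard k, ∑ i ∈ s, ∑ j ∈ s,
          if i ∈ B ∧ j ∈ B then g i * g j else 0 := Finset.sum_congr rfl key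
    _ = ∑ i ∈ s, ∑ j ∈ s, ∑ B ∈ s.powersetCard k,
          if i ∈ B ∧ j ∈ B then g i * g j else 0 := by
        rw [Finset.sum_comm]
        exact Finset.sum_congr rfl fun i _ => Finset.sum_comm
    _ = ∑ i ∈ s, ∑ j ∈ s,
          (((s.powersetCard k).filter (fun B => i ∈ B ∧ j ∈ B)).card : ℝ)
            * (g i * g j) := by
        refine Finset.sum_congr rfl fun i _ => Finset.sum_congr rfl fun j _ => ?_
        rw [← Finset.sum_filter, Finset.sum_const, nsmul_eq_mul]
    _ = ∑ i ∈ s, (((s.card - 1).choose (k - 1) : ℝ) * (g i) ^ 2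
          + pc s.card k * (g i * ((∑ j ∈ s, g j) - g i))) := by
        refine Finset.sum_congr rfl fun i hi => ?_
        rw [← Finset.add_sum_erase _ _ hi]
        have hd : ((s.powersetCard k).filter (fun B => i ∈ B ∧ i ∈ B))
            = ((s.powersetCard k).filter (fun B => i ∈ B)) := by
          ext B; simp
        have hoff : ∀ j ∈ s.erase i,
            (((s.powersetCard k).filter (fun B => i ∈ B ∧ j ∈ B)).card : ℝ)
              * (g i * g j) = pc s.card k * (g i * g j) := by
          intro j hj
          rw [count_pair_real s i j hi (Finset.mem_of_mem_erase hj)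
            (Ne.symm (Finset.ne_of_mem_erase hj)) k hk]
        rw [hd, count_mem s i hi k hk, Finset.sum_congr rfl hoff,
          ← Finset.mul_sum, ← Finset.mul_sum, Finset.sum_erase_eq_sub hi]
        ring
    _ = _ := by
        rw [Finset.sum_add_distrib, ← Finset.mul_sum, ← Finset.mul_sum]
        have h2 : ∑ i ∈ s, g i * ((∑ j ∈ s, g j) - g i)
            = (∑ i ∈ s, g i) ^ 2 - ∑ i ∈ s, (g i) ^ 2 := by
          rw [Finset.sum_congr rfl
            (fun i _ => by ring :
              ∀ i ∈ s, g i * ((∑ j ∈ s, g j) - g i)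
                = g i * (∑ j ∈ s, g j) - (g i) ^ 2),
            Finset.sum_sub_distrib, ← Finset.sum_mul, sq]
        rw [h2]

lemma count_mixed {α : Type*} [Fintype α] [DecidableEq α] (i j : α) (hij : i ≠ j)
    (m : ℕ) (hm : 1 ≤ m) :
    ((((univ : Finset α).powersetCard m)).filter (fun A => i ∈ A ∧ j ∈ Aᶜ)).card
      = (Fintype.card α - 2).choose (m - 1) := by
  have heq : (((univ : Finset α).powersetCard m)).filter (fun A => i ∈ A ∧ j ∈ Aᶜ)
      = (((univ : Finset α).erase j).powersetCard m).filter (fun A => i ∈ A) := by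
    ext A
    simp only [Finset.mem_filter, Finset.mem_powersetCard, Finset.subset_erase,
      Finset.mem_compl, Finset.subset_univ, true_and]
    tauto
  rw [heq, count_mem _ i (Finset.mem_erase.mpr ⟨hij, Finset.mem_univ i⟩) m hm,
    Finset.card_erase_of_mem (Finset.mem_univ j), Finset.card_univ]
  congr 1

lemma sum_powersetCard_mul_compl {α : Type*} [Fintype α] [DecidableEq α]
    (f g : α → ℝ) (m : ℕ) (hm : 1 ≤ m) :
    ∑ A ∈ (univ : Finset α).powersetCard m, (∑ i ∈ A, f i) * (∑ j ∈ Aᶜ, g j)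
      = ((Fintype.card α - 2).choose (m - 1) : ℝ)
          * ((∑ i, f i) * (∑ j, g j) - ∑ i, f i * g i) := by
  have key : ∀ A ∈ (univ : Finset α).powersetCard m,
      (∑ i ∈ A, f i) * (∑ j ∈ Aᶜ, g j)
        = ∑ i, ∑ j, if i ∈ A ∧ j ∈ Aᶜ then f i * g j else 0 := by
    intro A _
    rw [sum_indicator_eq (Finset.subset_univ A) f,
      sum_indicator_eq (Finset.subset_univ Aᶜ) g, Finset.sum_mul_sum]
    refine Finset.sum_congr rfl fun i _ => Finset.sum_congr rfl fun j _ => ?_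
    by_cases h1 : i ∈ A <;> by_cases h2 : j ∈ Aᶜ <;> simp [h1, h2]
  calc ∑ A ∈ (univ : Finset α).powersetCard m, (∑ i ∈ A, f i) * (∑ j ∈ Aᶜ, g j)
      = ∑ A ∈ (univ : Finset α).powersetCard m, ∑ i, ∑ j,
          if i ∈ A ∧ j ∈ Aᶜ then f i * g j else 0 := Finset.sum_congr rfl key
    _ = ∑ i, ∑ j, ∑ A ∈ (univ : Finset α).powersetCard m,
          if i ∈ A ∧ j ∈ Aᶜ then f i * g j else 0 := by
        rw [Finset.sum_comm]
        exact Finset.sum_congr rfl fun i _ => Finset.sum_comm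
    _ = ∑ i, ∑ j, (((((univ : Finset α).powersetCard m)).filter
          (fun A => i ∈ A ∧ j ∈ Aᶜ)).card : ℝ) * (f i * g j) := by
        refine Finset.sum_congr rfl fun i _ => Finset.sum_congr rfl fun j _ => ?_
        rw [← Finset.sum_filter, Finset.sum_const, nsmul_eq_mul]
    _ = ∑ i, ((Fintype.card α - 2).choose (m - 1) : ℝ)
          * (f i * ((∑ j, g j) - g i)) := by
        refine Finset.sum_congr rfl fun i hi => ?_
        rw [← Finset.add_sum_erase _ _ (Finset.mem_univ i)]
        have hd : (((univ : Finset α).powersetCard m)).filter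
            (fun A => i ∈ A ∧ i ∈ Aᶜ) = ∅ := by
          rw [Finset.filter_eq_empty_iff]
          intro A _
          simp
        have hoff : ∀ j ∈ (univ : Finset α).erase i,
            (((((univ : Finset α).powersetCard m)).filter
              (fun A => i ∈ A ∧ j ∈ Aᶜ)).card : ℝ) * (f i * g j)
            = ((Fintype.card α - 2).choose (m - 1) : ℝ) * (f i * g j) := by
          intro j hj
          rw [count_mixed i j (Ne.symm (Finset.ne_of_mem_erase hj)) m hm]
        rw [hd, Finset.sum_congr rfl hoff, ← Finset.mul_sum, ← Finset.mul_sum,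
          Finset.sum_erase_eq_sub (Finset.mem_univ i)]
        simp
    _ = _ := by
        rw [← Finset.mul_sum]
        congr 1
        rw [Finset.sum_congr rfl
          (fun i _ => by ring :
            ∀ i ∈ (univ : Finset α), f i * ((∑ j, g j) - g i)
              = f i * (∑ j, g j) - f i * g i),
          Finset.sum_sub_distrib, ← Finset.sum_mul]

lemma sum_powersetCard_compl {α : Type*} [Fintype α] [DecidableEq α]
    (m : ℕ) (hm : m ≤ Fintype.card α) (F : Finset α → ℝ) :
    ∑ A ∈ (univ : Finset α).powersetCard m, F Aᶜ
      = ∑ D ∈ (univ : Finset α).powersetCard (Fintype.card α - m), F D := by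
  apply Finset.sum_nbij' (fun A => Aᶜ) (fun D => Dᶜ)
  · intro A hA
    rw [Finset.mem_powersetCard] at hA ⊢
    exact ⟨Finset.subset_univ _, by rw [Finset.card_compl, hA.2]⟩
  · intro D hD
    rw [Finset.mem_powersetCard] at hD ⊢
    refine ⟨Finset.subset_univ _, ?_⟩
    rw [Finset.card_compl, hD.2]
    omega
  · intro A _; exact compl_compl A
  · intro D _; exact compl_compl D
  · intro A _; rfl

lemma sum_design2 (N N1 n1 n0 : ℕ)
    (f : Finset (Fin N) × Finset (Fin N) × Finset (Fin N) → ℝ) :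
    ∑ p ∈ design2 N N1 n1 n0, f p
      = ∑ A ∈ (univ : Finset (Fin N)).powersetCard N1,
          ∑ B ∈ A.powersetCard n1, ∑ C ∈ Aᶜ.powersetCard n0, f (A, B, C) := by
  rw [design2, Finset.sum_filter, Fintype.sum_prod_type]
  have h1 : ∀ s : Finset (Fin N), ∀ G : Finset (Fin N) → ℝ, ∀ k : ℕ,
      ∑ B ∈ s.powersetCard k, G B
        = ∑ B : Finset (Fin N), if B ⊆ s ∧ B.card = k then G B else 0 := by
    intro s G k
    rw [← Finset.sum_filter]
    apply Finset.sum_congr _ (fun _ _ => rfl)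
    ext B
    simp [Finset.mem_powersetCard]
  rw [h1 univ _ N1]
  refine Finset.sum_congr rfl fun A _ => ?_
  rw [Fintype.sum_prod_type]
  by_cases hA : A.card = N1
  · rw [if_pos]
    · rw [h1 A _ n1]
      refine Finset.sum_congr rfl fun B _ => ?_
      by_cases hB : B ⊆ A ∧ B.card = n1
      · rw [if_pos hB, h1 Aᶜ _ n0]
        refine Finset.sum_congr rfl fun C _ => ?_
        by_cases hC : C ⊆ Aᶜ ∧ C.card = n0
        · rw [if_pos hC, if_pos ⟨hA, hB.1, hB.2, hC.1, hC.2⟩]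
        · rw [if_neg hC, if_neg (by tauto)]
      · rw [if_neg hB]
        refine (Finset.sum_eq_zero fun C _ => ?_)
        rw [if_neg (by tauto)]
    · exact ⟨Finset.subset_univ A, hA⟩
  · rw [if_neg]
    · refine Finset.sum_eq_zero fun B _ => Finset.sum_eq_zero fun C _ => ?_
      rw [if_neg (by tauto)]
    · simp [hA]

section Moments

variable {N N1 n1 n0 : ℕ}

lemma card_design2 (N N1 n1 n0 : ℕ) :
    ((design2 N N1 n1 n0).card : ℝ)
      = (N.choose N1 : ℝ) * (N1.choose n1 : ℝ) * ((N - N1).choose n0 : ℝ) := by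
  have h := sum_design2 N N1 n1 n0 (fun _ => (1 : ℝ))
  rw [Finset.sum_const, nsmul_eq_mul, mul_one] at h
  rw [h]
  have step : ∀ A ∈ (univ : Finset (Fin N)).powersetCard N1,
      (∑ _B ∈ A.powersetCard n1, ∑ _C ∈ Aᶜ.powersetCard n0, (1 : ℝ))
        = (N1.choose n1 : ℝ) * ((N - N1).choose n0 : ℝ) := by
    intro A hA
    have hA' : A.card = N1 := (Finset.mem_powersetCard.mp hA).2
    have hAc : Aᶜ.card = N - N1 := by
      rw [Finset.card_compl, hA', Fintype.card_fin]
    simp [Finset.sum_const, Finset.card_powersetCard, hA', hAc]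
  rw [Finset.sum_congr rfl step, Finset.sum_const, Finset.card_powersetCard,
    Finset.card_univ, Fintype.card_fin, nsmul_eq_mul]
  ring

lemma mom1 (hn1 : 1 ≤ n1) (hn1' : n1 ≤ N1) (Y1 : Fin N → ℝ) :
    ∑ p ∈ design2 N N1 n1 n0, ∑ i ∈ p.2.1, Y1 i
      = ((N - N1).choose n0 : ℝ) * (((N1 - 1).choose (n1 - 1) : ℝ)
          * (((N - 1).choose (N1 - 1) : ℝ) * ∑ i, Y1 i)) := by
  have hN1pos : 1 ≤ N1 := le_trans hn1 hn1'
  rw [sum_design2]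
  have step : ∀ A ∈ (univ : Finset (Fin N)).powersetCard N1,
      (∑ B ∈ A.powersetCard n1, ∑ C ∈ Aᶜ.powersetCard n0, (∑ i ∈ B, Y1 i))
        = ((N - N1).choose n0 : ℝ) * (((N1 - 1).choose (n1 - 1) : ℝ)
            * ∑ i ∈ A, Y1 i) := by
    intro A hA
    have hA' : A.card = N1 := (Finset.mem_powersetCard.mp hA).2
    have hAc : Aᶜ.card = N - N1 := by
      rw [Finset.card_compl, hA', Fintype.card_fin]
    have inner : ∀ B ∈ A.powersetCard n1,
        (∑ C ∈ Aᶜ.powersetCard n0, (∑ i ∈ B, Y1 i))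
          = ((N - N1).choose n0 : ℝ) * ∑ i ∈ B, Y1 i := by
      intro B _
      rw [Finset.sum_const, Finset.card_powersetCard, hAc, nsmul_eq_mul]
    rw [Finset.sum_congr rfl inner, ← Finset.mul_sum,
      sum_powersetCard_sum A Y1 n1 hn1, hA']
  rw [Finset.sum_congr rfl step]
  rw [← Finset.mul_sum, ← Finset.mul_sum,
    sum_powersetCard_sum _ Y1 N1 hN1pos, Finset.card_univ, Fintype.card_fin]

lemma mom0 (hN1 : N1 ≤ N) (hn0 : 1 ≤ n0) (hn0' : n0 ≤ N - N1) (Y0 : Fin N → ℝ) :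
    ∑ p ∈ design2 N N1 n1 n0, ∑ j ∈ p.2.2, Y0 j
      = (N1.choose n1 : ℝ) * (((N - N1 - 1).choose (n0 - 1) : ℝ)
          * (((N - 1).choose (N - N1 - 1) : ℝ) * ∑ j, Y0 j)) := by
  have hNN1pos : 1 ≤ N - N1 := le_trans hn0 hn0'
  rw [sum_design2]
  have step : ∀ A ∈ (univ : Finset (Fin N)).powersetCard N1,
      (∑ B ∈ A.powersetCard n1, ∑ C ∈ Aᶜ.powersetCard n0, (∑ j ∈ C, Y0 j))
        = (N1.choose n1 : ℝ) * (((N - N1 - 1).choose (n0 - 1) : ℝ)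
            * ∑ j ∈ Aᶜ, Y0 j) := by
    intro A hA
    have hA' : A.card = N1 := (Finset.mem_powersetCard.mp hA).2
    have hAc : Aᶜ.card = N - N1 := by
      rw [Finset.card_compl, hA', Fintype.card_fin]
    have inner : ∀ B ∈ A.powersetCard n1,
        (∑ C ∈ Aᶜ.powersetCard n0, (∑ j ∈ C, Y0 j))
          = ((N - N1 - 1).choose (n0 - 1) : ℝ) * ∑ j ∈ Aᶜ, Y0 j := by
      intro B _
      rw [sum_powersetCard_sum Aᶜ Y0 n0 hn0, hAc]
    rw [Finset.sum_congr rfl inner, Finset.sum_const, Finset.card_powersetCard,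
      hA', nsmul_eq_mul]
  rw [Finset.sum_congr rfl step, ← Finset.mul_sum, ← Finset.mul_sum,
    sum_powersetCard_compl N1 (by rw [Fintype.card_fin]; exact hN1)
      (fun D => ∑ j ∈ D, Y0 j),
    Fintype.card_fin, sum_powersetCard_sum _ Y0 (N - N1) hNN1pos,
    Finset.card_univ, Fintype.card_fin]

lemma mom11 (hn1 : 1 ≤ n1) (hn1' : n1 ≤ N1) (Y1 : Fin N → ℝ) :
    ∑ p ∈ design2 N N1 n1 n0, (∑ i ∈ p.2.1, Y1 i) ^ 2
      = (((N - N1).choose n0 : ℝ) * (((N1 - 1).choose (n1 - 1) : ℝ) - pc N1 n1))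
            * (((N - 1).choose (N1 - 1) : ℝ) * ∑ i, (Y1 i) ^ 2)
        + (((N - N1).choose n0 : ℝ) * pc N1 n1)
            * (((N - 1).choose (N1 - 1) : ℝ) * ∑ i, (Y1 i) ^ 2
               + pc N N1 * ((∑ i, Y1 i) ^ 2 - ∑ i, (Y1 i) ^ 2)) := by
  have hN1pos : 1 ≤ N1 := le_trans hn1 hn1'
  rw [sum_design2]
  have step : ∀ A ∈ (univ : Finset (Fin N)).powersetCard N1,
      (∑ B ∈ A.powersetCard n1, ∑ C ∈ Aᶜ.powersetCard n0, (∑ i ∈ B, Y1 i) ^ 2)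
        = (((N - N1).choose n0 : ℝ) * (((N1 - 1).choose (n1 - 1) : ℝ) - pc N1 n1))
              * (∑ i ∈ A, (Y1 i) ^ 2)
          + (((N - N1).choose n0 : ℝ) * pc N1 n1) * (∑ i ∈ A, Y1 i) ^ 2 := by
    intro A hA
    have hA' : A.card = N1 := (Finset.mem_powersetCard.mp hA).2
    have hAc : Aᶜ.card = N - N1 := by
      rw [Finset.card_compl, hA', Fintype.card_fin]
    have inner : ∀ B ∈ A.powersetCard n1,
        (∑ C ∈ Aᶜ.powersetCard n0, (∑ i ∈ B, Y1 i) ^ 2)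
          = ((N - N1).choose n0 : ℝ) * (∑ i ∈ B, Y1 i) ^ 2 := by
      intro B _
      rw [Finset.sum_const, Finset.card_powersetCard, hAc, nsmul_eq_mul]
    rw [Finset.sum_congr rfl inner, ← Finset.mul_sum,
      sum_powersetCard_sq A Y1 n1 hn1, hA']
    ring
  rw [Finset.sum_congr rfl step, Finset.sum_add_distrib, ← Finset.mul_sum,
    ← Finset.mul_sum, sum_powersetCard_sum _ (fun i => (Y1 i) ^ 2) N1 hN1pos,
    sum_powersetCard_sq _ Y1 N1 hN1pos, Finset.card_univ, Fintype.card_fin]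

lemma mom00 (hN1 : N1 ≤ N) (hn0 : 1 ≤ n0) (hn0' : n0 ≤ N - N1) (Y0 : Fin N → ℝ) :
    ∑ p ∈ design2 N N1 n1 n0, (∑ j ∈ p.2.2, Y0 j) ^ 2
      = ((N1.choose n1 : ℝ) * (((N - N1 - 1).choose (n0 - 1) : ℝ) - pc (N - N1) n0))
            * (((N - 1).choose (N - N1 - 1) : ℝ) * ∑ j, (Y0 j) ^ 2)
        + ((N1.choose n1 : ℝ) * pc (N - N1) n0)
            * (((N - 1).choose (N - N1 - 1) : ℝ) * ∑ j, (Y0 j) ^ 2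
               + pc N (N - N1) * ((∑ j, Y0 j) ^ 2 - ∑ j, (Y0 j) ^ 2)) := by
  have hNN1pos : 1 ≤ N - N1 := le_trans hn0 hn0'
  rw [sum_design2]
  have step : ∀ A ∈ (univ : Finset (Fin N)).powersetCard N1,
      (∑ B ∈ A.powersetCard n1, ∑ C ∈ Aᶜ.powersetCard n0, (∑ j ∈ C, Y0 j) ^ 2)
        = ((N1.choose n1 : ℝ)
              * (((N - N1 - 1).choose (n0 - 1) : ℝ) - pc (N - N1) n0))
              * (∑ j ∈ Aᶜ, (Y0 j) ^ 2)
          + ((N1.choose n1 : ℝ) * pc (N - N1) n0) * (∑ j ∈ Aᶜ, Y0 j) ^ 2 := by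
    intro A hA
    have hA' : A.card = N1 := (Finset.mem_powersetCard.mp hA).2
    have hAc : Aᶜ.card = N - N1 := by
      rw [Finset.card_compl, hA', Fintype.card_fin]
    have inner : ∀ B ∈ A.powersetCard n1,
        (∑ C ∈ Aᶜ.powersetCard n0, (∑ j ∈ C, Y0 j) ^ 2)
          = ((N - N1 - 1).choose (n0 - 1) : ℝ) * ∑ j ∈ Aᶜ, (Y0 j) ^ 2
            + pc (N - N1) n0 * ((∑ j ∈ Aᶜ, Y0 j) ^ 2 - ∑ j ∈ Aᶜ, (Y0 j) ^ 2) := by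
      intro B _
      rw [sum_powersetCard_sq Aᶜ Y0 n0 hn0, hAc]
    rw [Finset.sum_congr rfl inner, Finset.sum_const, Finset.card_powersetCard,
      hA', nsmul_eq_mul]
    ring
  rw [Finset.sum_congr rfl step,
    sum_powersetCard_compl N1 (by rw [Fintype.card_fin]; exact hN1)
      (fun D => ((N1.choose n1 : ℝ)
              * (((N - N1 - 1).choose (n0 - 1) : ℝ) - pc (N - N1) n0))
              * (∑ j ∈ D, (Y0 j) ^ 2)
          + ((N1.choose n1 : ℝ) * pc (N - N1) n0) * (∑ j ∈ D, Y0 j) ^ 2),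
    Fintype.card_fin, Finset.sum_add_distrib, ← Finset.mul_sum, ← Finset.mul_sum,
    sum_powersetCard_sum _ (fun j => (Y0 j) ^ 2) (N - N1) hNN1pos,
    sum_powersetCard_sq _ Y0 (N - N1) hNN1pos, Finset.card_univ, Fintype.card_fin]

lemma mom10 (hn1 : 1 ≤ n1) (hn1' : n1 ≤ N1) (hn0 : 1 ≤ n0)
    (Y1 Y0 : Fin N → ℝ) :
    ∑ p ∈ design2 N N1 n1 n0, (∑ i ∈ p.2.1, Y1 i) * (∑ j ∈ p.2.2, Y0 j)
      = (((N1 - 1).choose (n1 - 1) : ℝ) * ((N - N1 - 1).choose (n0 - 1) : ℝ))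
          * (((N - 2).choose (N1 - 1) : ℝ)
             * ((∑ i, Y1 i) * (∑ j, Y0 j) - ∑ i, Y1 i * Y0 i)) := by
  have hN1pos : 1 ≤ N1 := le_trans hn1 hn1'
  rw [sum_design2]
  have step : ∀ A ∈ (univ : Finset (Fin N)).powersetCard N1,
      (∑ B ∈ A.powersetCard n1, ∑ C ∈ Aᶜ.powersetCard n0,
          (∑ i ∈ B, Y1 i) * (∑ j ∈ C, Y0 j))
        = (((N1 - 1).choose (n1 - 1) : ℝ) * ((N - N1 - 1).choose (n0 - 1) : ℝ))
            * ((∑ i ∈ A, Y1 i) * (∑ j ∈ Aᶜ, Y0 j)) := by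
    intro A hA
    have hA' : A.card = N1 := (Finset.mem_powersetCard.mp hA).2
    have hAc : Aᶜ.card = N - N1 := by
      rw [Finset.card_compl, hA', Fintype.card_fin]
    have inner : ∀ B ∈ A.powersetCard n1,
        (∑ C ∈ Aᶜ.powersetCard n0, (∑ i ∈ B, Y1 i) * (∑ j ∈ C, Y0 j))
          = (∑ i ∈ B, Y1 i)
              * (((N - N1 - 1).choose (n0 - 1) : ℝ) * ∑ j ∈ Aᶜ, Y0 j) := by
      intro B _
      rw [← Finset.mul_sum, sum_powersetCard_sum Aᶜ Y0 n0 hn0, hAc]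
    rw [Finset.sum_congr rfl inner, ← Finset.sum_mul,
      sum_powersetCard_sum A Y1 n1 hn1, hA']
    ring
  rw [Finset.sum_congr rfl step, ← Finset.mul_sum,
    sum_powersetCard_mul_compl Y1 Y0 N1 hN1pos, Fintype.card_fin]

end Moments

lemma mul_choose_sub (a b : ℕ) (hb : 1 ≤ b) :
    a * (a - 1).choose (b - 1) = b * a.choose b := by
  rcases Nat.eq_zero_or_pos a with rfl | ha
  · simp [Nat.choose_eq_zero_of_lt hb]
  · have h := Nat.add_one_mul_choose_eq (a - 1) (b - 1)
    have h1 : a - 1 + 1 = a := by omega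
    have h2 : b - 1 + 1 = b := by omega
    simp only [Nat.succ_eq_add_one, h1, h2] at h
    rw [h]; ring

lemma mul_choose_real (a b : ℕ) (hb : 1 ≤ b) :
    (a : ℝ) * ((a - 1).choose (b - 1) : ℝ) = (b : ℝ) * (a.choose b : ℝ) := by
  exact_mod_cast mul_choose_sub a b hb

lemma mul_choose_real2 (a b : ℕ) (hb : 2 ≤ b) (hba : b ≤ a) :
    (a : ℝ) * ((a : ℝ) - 1) * ((a - 2).choose (b - 2) : ℝ)
      = (b : ℝ) * ((b : ℝ) - 1) * (a.choose b : ℝ) := by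
  have e1 := mul_choose_real (a - 1) (b - 1) (by omega)
  have h1 : a - 1 - 1 = a - 2 := by omega
  have h2 : b - 1 - 1 = b - 2 := by omega
  rw [h1, h2] at e1
  have e2 := mul_choose_real a b (by omega)
  have c1 : ((a - 1 : ℕ) : ℝ) = (a : ℝ) - 1 := by
    have : (1 : ℕ) ≤ a := by omega
    push_cast [this]; ring
  have c2 : ((b - 1 : ℕ) : ℝ) = (b : ℝ) - 1 := by
    have : (1 : ℕ) ≤ b := by omega
    push_cast [this]; ring
  rw [c1, c2] at e1
  linear_combination (a : ℝ) * e1 + ((b : ℝ) - 1) * e2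

lemma mul_choose_mixed (N N1 : ℕ) (hN1 : 1 ≤ N1) (hN1' : N1 ≤ N - 1) (hN : 2 ≤ N) :
    (N : ℝ) * ((N : ℝ) - 1) * ((N - 2).choose (N1 - 1) : ℝ)
      = (N1 : ℝ) * ((N : ℝ) - (N1 : ℝ)) * (N.choose N1 : ℝ) := by
  have e1 := mul_choose_real (N - 1) N1 hN1
  have h1 : N - 1 - 1 = N - 2 := by omega
  rw [h1] at e1
  have c1 : ((N - 1 : ℕ) : ℝ) = (N : ℝ) - 1 := by
    have : (1 : ℕ) ≤ N := by omega
    push_cast [this]; ring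
  rw [c1] at e1
  -- N * (N-1).choose N1 = (N - N1) * N.choose N1
  have e2 := mul_choose_real N (N - N1) (by omega)
  have h2 : N - N1 - 1 = N - 1 - N1 := by omega
  rw [h2, Nat.choose_symm (by omega : N1 ≤ N - 1),
    Nat.choose_symm (by omega : N1 ≤ N)] at e2
  have c2 : ((N - N1 : ℕ) : ℝ) = (N : ℝ) - (N1 : ℝ) := by
    have : N1 ≤ N := by omega
    push_cast [this]; ring
  rw [c2] at e2
  linear_combination (N : ℝ) * e1 + (N1 : ℝ) * e2


set_option maxHeartbeats 2000000 in
/-- Var(τ̂) = S₁²/n₁ + S₀²/n₀ - S_τ²/N in the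
randomize-first-sample-second design. -/
theorem design2_mean_difference_variance (N N1 n1 n0 : ℕ) (hN : 2 ≤ N)
    (hN1 : N1 ≤ N) (hn1 : 1 ≤ n1) (hn1' : n1 ≤ N1)
    (hn0 : 1 ≤ n0) (hn0' : n0 ≤ N - N1)
    (Y1 Y0 : Fin N → ℝ) (Ybar1 Ybar0 S1sq S0sq Stausq : ℝ)
    (hY1 : Ybar1 = (∑ i, Y1 i) / (N : ℝ))
    (hY0 : Ybar0 = (∑ i, Y0 i) / (N : ℝ))
    (hS1 : S1sq = (∑ i, (Y1 i - Ybar1) ^ 2) / ((N : ℝ) - 1))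
    (hS0 : S0sq = (∑ i, (Y0 i - Ybar0) ^ 2) / ((N : ℝ) - 1))
    (hStau : Stausq =
      (∑ i, ((Y1 i - Y0 i) - (Ybar1 - Ybar0)) ^ 2) / ((N : ℝ) - 1)) :
    Ex (design2 N N1 n1 n0)
        (fun p => ((∑ i ∈ p.2.1, Y1 i) / (n1 : ℝ)
          - (∑ i ∈ p.2.2, Y0 i) / (n0 : ℝ)) ^ 2)
      - (Ex (design2 N N1 n1 n0)
          (fun p => (∑ i ∈ p.2.1, Y1 i) / (n1 : ℝ)
            - (∑ i ∈ p.2.2, Y0 i) / (n0 : ℝ))) ^ 2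
      = S1sq / (n1 : ℝ) + S0sq / (n0 : ℝ) - Stausq / (N : ℝ) := by
  have hN1pos : 1 ≤ N1 := le_trans hn1 hn1'
  have hNN1pos : 1 ≤ N - N1 := le_trans hn0 hn0'
  have hN1ltN : N1 ≤ N - 1 := by omega
  have hNR : (N : ℝ) ≠ 0 := Nat.cast_ne_zero.mpr (by omega)
  have hNR1 : (N : ℝ) - 1 ≠ 0 := by
    have : (2 : ℝ) ≤ (N : ℝ) := by exact_mod_cast hN
    linarith
  have hn1R : (n1 : ℝ) ≠ 0 := Nat.cast_ne_zero.mpr (by omega)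
  have hn0R : (n0 : ℝ) ≠ 0 := Nat.cast_ne_zero.mpr (by omega)
  have Mcard := card_design2 N N1 n1 n0
  have hMne : (((design2 N N1 n1 n0).card : ℕ) : ℝ) ≠ 0 := by
    rw [Mcard]
    have h1 : (0 : ℝ) < (N.choose N1 : ℝ) :=
      Nat.cast_pos.mpr (Nat.choose_pos hN1)
    have h2 : (0 : ℝ) < (N1.choose n1 : ℝ) :=
      Nat.cast_pos.mpr (Nat.choose_pos hn1')
    have h3 : (0 : ℝ) < ((N - N1).choose n0 : ℝ) :=
      Nat.cast_pos.mpr (Nat.choose_pos hn0')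
    positivity
  -- ratio identities
  have E1 := mul_choose_real N N1 hN1pos
  have E2 := mul_choose_real N1 n1 hn1
  have E1' := mul_choose_real N (N - N1) hNN1pos
  rw [Nat.choose_symm hN1] at E1'
  have E2' := mul_choose_real (N - N1) n0 hn0
  have cW : ((N - N1 : ℕ) : ℝ) = (N : ℝ) - (N1 : ℝ) := by push_cast [hN1]; ring
  rw [cW] at E1' E2'
  have r1 : ((N - N1).choose n0 : ℝ) * (((N1 - 1).choose (n1 - 1) : ℝ)
        * ((N - 1).choose (N1 - 1) : ℝ)) * (N : ℝ)
      = (n1 : ℝ) * ((N.choose N1 : ℝ) * (N1.choose n1 : ℝ)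
        * ((N - N1).choose n0 : ℝ)) := by
    linear_combination (((N - N1).choose n0 : ℝ) * ((N1 - 1).choose (n1 - 1) : ℝ)) * E1
      + (((N - N1).choose n0 : ℝ) * (N.choose N1 : ℝ)) * E2
  have r0 : (N1.choose n1 : ℝ) * (((N - N1 - 1).choose (n0 - 1) : ℝ)
        * ((N - 1).choose (N - N1 - 1) : ℝ)) * (N : ℝ)
      = (n0 : ℝ) * ((N.choose N1 : ℝ) * (N1.choose n1 : ℝ)
        * ((N - N1).choose n0 : ℝ)) := by
    linear_combination ((N1.choose n1 : ℝ) * ((N - N1 - 1).choose (n0 - 1) : ℝ)) * E1'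
      + ((N1.choose n1 : ℝ) * (N.choose N1 : ℝ)) * E2'
  have r11 : ((N - N1).choose n0 : ℝ) * pc N1 n1 * pc N N1 * ((N : ℝ) * ((N : ℝ) - 1))
      = (n1 : ℝ) * ((n1 : ℝ) - 1) * ((N.choose N1 : ℝ) * (N1.choose n1 : ℝ)
        * ((N - N1).choose n0 : ℝ)) := by
    by_cases h2n1 : 2 ≤ n1
    · have hN12 : 2 ≤ N1 := le_trans h2n1 hn1'
      rw [pc, if_pos h2n1, pc, if_pos hN12]
      have E3 := mul_choose_real2 N N1 hN12 hN1
      have E4 := mul_choose_real2 N1 n1 h2n1 hn1'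
      linear_combination (((N - N1).choose n0 : ℝ) * ((N1 - 2).choose (n1 - 2) : ℝ)) * E3
        + (((N - N1).choose n0 : ℝ) * (N.choose N1 : ℝ)) * E4
    · have hn1eq : n1 = 1 := by omega
      subst hn1eq
      rw [pc, if_neg (by omega)]
      simp
  have r00 : (N1.choose n1 : ℝ) * pc (N - N1) n0 * pc N (N - N1)
        * ((N : ℝ) * ((N : ℝ) - 1))
      = (n0 : ℝ) * ((n0 : ℝ) - 1) * ((N.choose N1 : ℝ) * (N1.choose n1 : ℝ)
        * ((N - N1).choose n0 : ℝ)) := by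
    by_cases h2n0 : 2 ≤ n0
    · have hW2 : 2 ≤ N - N1 := le_trans h2n0 hn0'
      rw [pc, if_pos h2n0, pc, if_pos hW2]
      have E3 := mul_choose_real2 N (N - N1) hW2 (by omega)
      rw [Nat.choose_symm hN1, cW] at E3
      have E4 := mul_choose_real2 (N - N1) n0 h2n0 hn0'
      rw [cW] at E4
      linear_combination ((N1.choose n1 : ℝ) * (((N - N1) - 2).choose (n0 - 2) : ℝ)) * E3
        + ((N1.choose n1 : ℝ) * (N.choose N1 : ℝ)) * E4
    · have hn0eq : n0 = 1 := by omega
      subst hn0eq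
      rw [pc, if_neg (by omega)]
      simp
  have r10 : (((N1 - 1).choose (n1 - 1) : ℝ) * ((N - N1 - 1).choose (n0 - 1) : ℝ))
        * ((N - 2).choose (N1 - 1) : ℝ) * ((N : ℝ) * ((N : ℝ) - 1))
      = (n1 : ℝ) * (n0 : ℝ) * ((N.choose N1 : ℝ) * (N1.choose n1 : ℝ)
        * ((N - N1).choose n0 : ℝ)) := by
    have E5 := mul_choose_mixed N N1 hN1pos hN1ltN hN
    linear_combination (((N1 - 1).choose (n1 - 1) : ℝ)
        * ((N - N1 - 1).choose (n0 - 1) : ℝ)) * E5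
      + (((N : ℝ) - (N1 : ℝ)) * (N.choose N1 : ℝ)
        * ((N - N1 - 1).choose (n0 - 1) : ℝ)) * E2
      + ((n1 : ℝ) * (N1.choose n1 : ℝ) * (N.choose N1 : ℝ)) * E2'
  -- closed forms of the design sums
  have v1 : (∑ p ∈ design2 N N1 n1 n0, ∑ i ∈ p.2.1, Y1 i)
      = (n1 : ℝ) * (∑ i, Y1 i) * ((design2 N N1 n1 n0).card : ℝ) / (N : ℝ) := by
    rw [eq_div_iff hNR, mom1 hn1 hn1' Y1, Mcard]
    linear_combination (∑ i, Y1 i) * r1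
  have v0 : (∑ p ∈ design2 N N1 n1 n0, ∑ j ∈ p.2.2, Y0 j)
      = (n0 : ℝ) * (∑ j, Y0 j) * ((design2 N N1 n1 n0).card : ℝ) / (N : ℝ) := by
    rw [eq_div_iff hNR, mom0 hN1 hn0 hn0' Y0, Mcard]
    linear_combination (∑ j, Y0 j) * r0
  have v11 : (∑ p ∈ design2 N N1 n1 n0, (∑ i ∈ p.2.1, Y1 i) ^ 2)
      = ((n1 : ℝ) * ((N : ℝ) - 1) * (∑ i, (Y1 i) ^ 2)
          + (n1 : ℝ) * ((n1 : ℝ) - 1) * ((∑ i, Y1 i) ^ 2 - ∑ i, (Y1 i) ^ 2))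
        * ((design2 N N1 n1 n0).card : ℝ) / ((N : ℝ) * ((N : ℝ) - 1)) := by
    rw [eq_div_iff (mul_ne_zero hNR hNR1), mom11 hn1 hn1' Y1, Mcard]
    linear_combination (((N : ℝ) - 1) * (∑ i, (Y1 i) ^ 2)) * r1
      + ((∑ i, Y1 i) ^ 2 - ∑ i, (Y1 i) ^ 2) * r11
  have v00 : (∑ p ∈ design2 N N1 n1 n0, (∑ j ∈ p.2.2, Y0 j) ^ 2)
      = ((n0 : ℝ) * ((N : ℝ) - 1) * (∑ j, (Y0 j) ^ 2)
          + (n0 : ℝ) * ((n0 : ℝ) - 1) * ((∑ j, Y0 j) ^ 2 - ∑ j, (Y0 j) ^ 2))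
        * ((design2 N N1 n1 n0).card : ℝ) / ((N : ℝ) * ((N : ℝ) - 1)) := by
    rw [eq_div_iff (mul_ne_zero hNR hNR1), mom00 hN1 hn0 hn0' Y0, Mcard]
    linear_combination (((N : ℝ) - 1) * (∑ j, (Y0 j) ^ 2)) * r0
      + ((∑ j, Y0 j) ^ 2 - ∑ j, (Y0 j) ^ 2) * r00
  have v10 : (∑ p ∈ design2 N N1 n1 n0, (∑ i ∈ p.2.1, Y1 i) * (∑ j ∈ p.2.2, Y0 j))
      = ((n1 : ℝ) * (n0 : ℝ) * ((∑ i, Y1 i) * (∑ j, Y0 j) - ∑ i, Y1 i * Y0 i))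
        * ((design2 N N1 n1 n0).card : ℝ) / ((N : ℝ) * ((N : ℝ) - 1)) := by
    rw [eq_div_iff (mul_ne_zero hNR hNR1), mom10 hn1 hn1' hn0 Y1 Y0, Mcard]
    linear_combination ((∑ i, Y1 i) * (∑ j, Y0 j) - ∑ i, Y1 i * Y0 i) * r10
  -- sum-of-squares expansions
  have hsum1 : ∑ i, (Y1 i - Ybar1) ^ 2
      = (∑ i, (Y1 i) ^ 2) - 2 * Ybar1 * (∑ i, Y1 i) + (N : ℝ) * Ybar1 ^ 2 := by
    rw [Finset.sum_congr rfl
      (fun i _ => by ring :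
        ∀ i ∈ (univ : Finset (Fin N)), (Y1 i - Ybar1) ^ 2
          = (Y1 i) ^ 2 - (2 * Ybar1) * Y1 i + Ybar1 ^ 2),
      Finset.sum_add_distrib, Finset.sum_sub_distrib, ← Finset.mul_sum,
      Finset.sum_const, Finset.card_univ, Fintype.card_fin, nsmul_eq_mul]
  have hsum0 : ∑ j, (Y0 j - Ybar0) ^ 2
      = (∑ j, (Y0 j) ^ 2) - 2 * Ybar0 * (∑ j, Y0 j) + (N : ℝ) * Ybar0 ^ 2 := by
    rw [Finset.sum_congr rfl
      (fun j _ => by ring :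
        ∀ j ∈ (univ : Finset (Fin N)), (Y0 j - Ybar0) ^ 2
          = (Y0 j) ^ 2 - (2 * Ybar0) * Y0 j + Ybar0 ^ 2),
      Finset.sum_add_distrib, Finset.sum_sub_distrib, ← Finset.mul_sum,
      Finset.sum_const, Finset.card_univ, Fintype.card_fin, nsmul_eq_mul]
  have hsumtau : ∑ i, ((Y1 i - Y0 i) - (Ybar1 - Ybar0)) ^ 2
      = (∑ i, (Y1 i) ^ 2) + (∑ i, (Y0 i) ^ 2) - 2 * (∑ i, Y1 i * Y0 i)
        - 2 * (Ybar1 - Ybar0) * (∑ i, Y1 i) + 2 * (Ybar1 - Ybar0) * (∑ i, Y0 i)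
        + (N : ℝ) * (Ybar1 - Ybar0) ^ 2 := by
    rw [Finset.sum_congr rfl
      (fun i _ => by ring :
        ∀ i ∈ (univ : Finset (Fin N)), ((Y1 i - Y0 i) - (Ybar1 - Ybar0)) ^ 2
          = (Y1 i) ^ 2 + ((Y0 i) ^ 2 + ((-2) * (Y1 i * Y0 i)
            + ((-(2 * (Ybar1 - Ybar0))) * Y1 i + ((2 * (Ybar1 - Ybar0)) * Y0 i
              + (Ybar1 - Ybar0) ^ 2))))),
      Finset.sum_add_distrib, Finset.sum_add_distrib, Finset.sum_add_distrib,
      Finset.sum_add_distrib, Finset.sum_add_distrib,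
      ← Finset.mul_sum, ← Finset.mul_sum, ← Finset.mul_sum,
      Finset.sum_const, Finset.card_univ, Fintype.card_fin, nsmul_eq_mul]
    ring
  -- assemble
  subst hS1 hS0 hStau
  simp only [Ex]
  have hg1 : ∑ p ∈ design2 N N1 n1 n0,
      ((∑ i ∈ p.2.1, Y1 i) / (n1 : ℝ) - (∑ i ∈ p.2.2, Y0 i) / (n0 : ℝ))
      = (∑ p ∈ design2 N N1 n1 n0, ∑ i ∈ p.2.1, Y1 i) / (n1 : ℝ)
        - (∑ p ∈ design2 N N1 n1 n0, ∑ j ∈ p.2.2, Y0 j) / (n0 : ℝ) := by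
    rw [Finset.sum_sub_distrib, ← Finset.sum_div, ← Finset.sum_div]
  have hg2 : ∑ p ∈ design2 N N1 n1 n0,
      ((∑ i ∈ p.2.1, Y1 i) / (n1 : ℝ) - (∑ i ∈ p.2.2, Y0 i) / (n0 : ℝ)) ^ 2
      = (∑ p ∈ design2 N N1 n1 n0, (∑ i ∈ p.2.1, Y1 i) ^ 2) / (n1 : ℝ) ^ 2
        + (∑ p ∈ design2 N N1 n1 n0, (∑ j ∈ p.2.2, Y0 j) ^ 2) / (n0 : ℝ) ^ 2
        - (∑ p ∈ design2 N N1 n1 n0, (∑ i ∈ p.2.1, Y1 i) * (∑ j ∈ p.2.2, Y0 j))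
            * (2 / ((n1 : ℝ) * (n0 : ℝ))) := by
    rw [Finset.sum_congr rfl
      (fun p _ => by ring :
        ∀ p ∈ design2 N N1 n1 n0,
          ((∑ i ∈ p.2.1, Y1 i) / (n1 : ℝ) - (∑ i ∈ p.2.2, Y0 i) / (n0 : ℝ)) ^ 2
            = (∑ i ∈ p.2.1, Y1 i) ^ 2 / (n1 : ℝ) ^ 2
              + (∑ i ∈ p.2.2, Y0 i) ^ 2 / (n0 : ℝ) ^ 2
              - ((∑ i ∈ p.2.1, Y1 i) * (∑ i ∈ p.2.2, Y0 i))
                  * (2 / ((n1 : ℝ) * (n0 : ℝ)))),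
      Finset.sum_sub_distrib, Finset.sum_add_distrib, ← Finset.sum_div,
      ← Finset.sum_div, ← Finset.sum_mul]
  rw [hg2, hg1, v1, v0, v11, v00, v10, hsum1, hsum0, hsumtau, hY1, hY0]
  field_simp
  ring
end
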